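/- (Theorem 1 for ISTC, exact support recovery) Under the setting of the ISTC continuation algorithm — Ψ ∈ ℝ^{n×p} with unit-norm columns and mutual coherence μ satisfying μ·s < 1/2; x† ∈ ℝ^p with support A†, |A†| = s ≥ 1; y = Ψ x† + η with ‖η‖₂ ≤ ε > 0; C₁ > 1/(1 − 2μs); α = (1 − 1/C₁)/(μs); γ ∈ [2μs/(1 − 1/C₁), 1); K ≥ 1; λ_ℓ = γ^ℓ λ₀ with ‖x†‖_{ℓ∞} ≤ α γ λ₀; x(λ₀) = 0 and x(λ_ℓ) obtained by K iterations of z ↦ S_{λ_ℓ}(z + Ψᵗ(y − Ψ z)) from x(λ_{ℓ−1}); output x* = x(λ_{ℓ*−1}) where ℓ* is the first index with λ_{ℓ*} < C₁ε — if min_{i ∈ A†} |x†_i| > (C₁ − 1)ε/(μs), then supp(x*) = A†. -/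

import Mathlib

/-! Write `b = z + Ψᵀ(y − Ψz)` for the gradient step. Since `b − x† = (ΨᵀΨ − 1)(x† − z) + Ψᵀη`
and `ΨᵀΨ − 1` has entries bounded by `μ`, an iterate `z` supported in `A†` with
`‖z − x†‖∞ ≤ e` gives `‖b − x†‖∞ ≤ μse + ε`. A threshold `λ ≥ μse + ε` therefore kills every
coordinate outside `A†` and leaves error at most `μse + ε + λ`. On the continuation path,
with `e = αλ_ℓ`, the identity `μsα = 1 − 1/C₁` and `C₁ε ≤ λ_ℓ` give `μse + ε ≤ λ_ℓ` and an
error `≤ 2λ_ℓ ≤ αγλ_ℓ = αλ_{ℓ+1}`, so the invariant propagates through all `K` inner steps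
and all levels. At the output the error is `< αC₁ε = (C₁ − 1)ε/(μs)`, below every `|x†_i|`
on `A†`, so no coordinate of `A†` can vanish. -/

open Finset Matrix

noncomputable def softThresh (lam t : ℝ) : ℝ := Real.sign t * max (|t| - lam) 0

lemma softThresh_eq_zero_of_abs_le {lam t : ℝ} (h : |t| ≤ lam) : softThresh lam t = 0 := by
  rw [softThresh, max_eq_right (sub_nonpos.mpr h), mul_zero]

lemma abs_softThresh_sub_le {lam : ℝ} (hlam : 0 ≤ lam) (t : ℝ) :
    |softThresh lam t - t| ≤ lam := by
  unfold softThresh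
  rw [abs_le]
  rcases lt_trichotomy t 0 with h | rfl | h
  · rw [Real.sign_of_neg h, abs_of_neg h]
    rcases max_cases (-t - lam) 0 with ⟨h1, _⟩ | ⟨h1, _⟩ <;> rw [h1] <;> constructor <;> linarith
  · simp [hlam]
  · rw [Real.sign_of_pos h, abs_of_pos h]
    rcases max_cases (t - lam) 0 with ⟨h1, _⟩ | ⟨h1, _⟩ <;> rw [h1] <;> constructor <;> linarith

section

variable {m ι : Type*}

lemma abs_mulVec_apply_le_of_support_subset [Fintype ι] {M : Matrix m ι ℝ} {d : ι → ℝ}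
    {A : Finset ι} {μ e : ℝ} (i : m) (hd : Function.support d ⊆ A)
    (hM : ∀ j ∈ A, |M i j| ≤ μ) (hde : ‖d‖ ≤ e) : |(M *ᵥ d) i| ≤ μ * #A * e := by
  have hsum : (M *ᵥ d) i = ∑ j ∈ A, M i j * d j := by
    refine (Finset.sum_subset (Finset.subset_univ A) fun j _ hj => ?_).symm
    rw [Function.notMem_support.mp fun h => hj (hd h), mul_zero]
  calc |(M *ᵥ d) i| ≤ ∑ j ∈ A, |M i j| * |d j| := by
        rw [hsum]; exact (abs_sum_le_sum_abs _ _).trans_eq (by simp only [abs_mul])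
    _ ≤ ∑ _j ∈ A, μ * e := Finset.sum_le_sum fun j hj =>
        mul_le_mul (hM j hj) ((norm_le_pi_norm d j).trans hde) (abs_nonneg _)
          ((abs_nonneg _).trans (hM j hj))
    _ = μ * #A * e := by rw [Finset.sum_const, nsmul_eq_mul]; ring

variable [Fintype m]

lemma abs_transpose_mulVec_apply_le {Ψ : Matrix m ι ℝ} {η : m → ℝ} {ε : ℝ} {i : ι}
    (hcol : ∑ k, Ψ k i ^ 2 = 1) (hη : Real.sqrt (∑ k, η k ^ 2) ≤ ε) :
    |(Ψᵀ *ᵥ η) i| ≤ ε := by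
  refine (Real.abs_le_sqrt ?_).trans hη
  calc (Ψᵀ *ᵥ η) i ^ 2 = (∑ k, Ψ k i * η k) ^ 2 := rfl
    _ ≤ (∑ k, Ψ k i ^ 2) * ∑ k, η k ^ 2 := Finset.sum_mul_sq_le_sq_mul_sq _ _ _
    _ = ∑ k, η k ^ 2 := by rw [hcol, one_mul]

lemma abs_gram_sub_one_apply_le [DecidableEq ι] {Ψ : Matrix m ι ℝ} {μ : ℝ}
    (hcol : ∀ i, ∑ k, Ψ k i ^ 2 = 1) (hcoh : ∀ i j, i ≠ j → |∑ k, Ψ k i * Ψ k j| ≤ μ)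
    (hμ : 0 ≤ μ) (i j : ι) : |(Ψᵀ * Ψ - 1 : Matrix ι ι ℝ) i j| ≤ μ := by
  rcases eq_or_ne i j with rfl | hij
  · simpa [Matrix.mul_apply, ← sq, hcol] using hμ
  · simpa [Matrix.mul_apply, Matrix.one_apply_ne hij] using hcoh i j hij

variable [Fintype ι]

noncomputable def istcStep (Ψ : Matrix m ι ℝ) (y : m → ℝ) (lam : ℝ) (z : ι → ℝ) : ι → ℝ :=
  fun i => softThresh lam ((z + Ψᵀ *ᵥ (y - Ψ *ᵥ z)) i)

lemma add_transpose_mulVec_residual_sub [DecidableEq ι] (Ψ : Matrix m ι ℝ) (x z : ι → ℝ)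
    (η : m → ℝ) : z + Ψᵀ *ᵥ (Ψ *ᵥ x + η - Ψ *ᵥ z) - x = (Ψᵀ * Ψ - 1) *ᵥ (x - z) + Ψᵀ *ᵥ η := by
  simp only [mulVec_sub, mulVec_add, sub_mulVec, one_mulVec, mulVec_mulVec]
  abel

end

section

variable {ι : Type*} [Fintype ι]

def sparseBall (A : Finset ι) (x : ι → ℝ) (e : ℝ) : Set (ι → ℝ) :=
  {z | Function.support z ⊆ A ∧ ‖z - x‖ ≤ e}

lemma sparseBall_mono {A : Finset ι} {x : ι → ℝ} {e e' : ℝ} (h : e ≤ e') :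
    sparseBall A x e ⊆ sparseBall A x e' :=
  fun _ hz => ⟨hz.1, hz.2.trans h⟩

lemma support_eq_of_mem_sparseBall {A : Finset ι} {x z : ι → ℝ} {e : ℝ}
    (hz : z ∈ sparseBall A x e) (hmin : ∀ i ∈ A, e < |x i|) : Function.support z = A := by
  refine hz.1.antisymm fun i hi hzi => (hmin i hi).not_ge ?_
  calc |x i| = ‖(z - x) i‖ := by rw [Pi.sub_apply, hzi, zero_sub, norm_neg, Real.norm_eq_abs]
    _ ≤ e := (norm_le_pi_norm _ i).trans hz.2

end

lemma Set.MapsTo.iterate_of_subset {α : Type*} {f : α → α} {s t : Set α}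
    (hf : Set.MapsTo f s t) (hts : t ⊆ s) {K : ℕ} (hK : K ≠ 0) : Set.MapsTo f^[K] s t := by
  obtain ⟨k, rfl⟩ := Nat.exists_eq_succ_of_ne_zero hK
  rw [Function.iterate_succ']
  exact hf.comp ((hf.mono_right hts).iterate k)

section

variable {m ι : Type*} [Fintype m] [Fintype ι] [DecidableEq ι] {Ψ : Matrix m ι ℝ} {μ ε : ℝ}
  {x : ι → ℝ} {η : m → ℝ} {A : Finset ι}
  (hcol : ∀ i, ∑ k, Ψ k i ^ 2 = 1) (hcoh : ∀ i j, i ≠ j → |∑ k, Ψ k i * Ψ k j| ≤ μ)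
  (hμ : 0 ≤ μ) (hη : Real.sqrt (∑ k, η k ^ 2) ≤ ε) (hx : Function.support x ⊆ A)
include hcol hcoh hμ hη hx

lemma abs_add_transpose_mulVec_residual_sub_le {z : ι → ℝ} {e : ℝ}
    (hz : Function.support z ⊆ A) (hze : ‖z - x‖ ≤ e) (i : ι) :
    |(z + Ψᵀ *ᵥ (Ψ *ᵥ x + η - Ψ *ᵥ z)) i - x i| ≤ μ * #A * e + ε := by
  have hxz : Function.support (x - z) ⊆ A :=
    (Function.support_sub x z).trans (Set.union_subset hx hz)
  rw [← Pi.sub_apply, add_transpose_mulVec_residual_sub, Pi.add_apply]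
  exact (abs_add_le _ _).trans <| add_le_add
    (abs_mulVec_apply_le_of_support_subset i hxz
      (fun j _ => abs_gram_sub_one_apply_le hcol hcoh hμ i j) (norm_sub_rev x z ▸ hze))
    (abs_transpose_mulVec_apply_le (hcol i) hη)

lemma mapsTo_istcStep_sparseBall {lam e : ℝ} (hlam : μ * #A * e + ε ≤ lam) :
    Set.MapsTo (istcStep Ψ (Ψ *ᵥ x + η) lam) (sparseBall A x e)
      (sparseBall A x (μ * #A * e + ε + lam)) := by
  rintro z ⟨hz, hze⟩
  set b := z + Ψᵀ *ᵥ (Ψ *ᵥ x + η - Ψ *ᵥ z)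
  have hb := abs_add_transpose_mulVec_residual_sub_le hcol hcoh hμ hη hx hz hze
  have hbias : 0 ≤ μ * #A * e + ε := add_nonneg
    (mul_nonneg (mul_nonneg hμ (Nat.cast_nonneg _)) ((norm_nonneg _).trans hze))
    ((Real.sqrt_nonneg _).trans hη)
  have hlam0 : 0 ≤ lam := hbias.trans hlam
  refine ⟨fun i hi => ?_, (pi_norm_le_iff_of_nonneg (by linarith)).2 fun i => ?_⟩
  · by_contra hiA
    have hxi : x i = 0 := Function.notMem_support.mp fun h => hiA (hx h)
    refine hi (softThresh_eq_zero_of_abs_le ?_)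
    simpa only [hxi, sub_zero] using (hb i).trans hlam
  · calc ‖(istcStep Ψ (Ψ *ᵥ x + η) lam z - x) i‖
          = |(softThresh lam (b i) - b i) + (b i - x i)| := by
            rw [Real.norm_eq_abs, Pi.sub_apply, istcStep, sub_add_sub_cancel]
      _ ≤ lam + (μ * #A * e + ε) :=
          (abs_add_le _ _).trans (add_le_add (abs_softThresh_sub_le hlam0 _) (hb i))
      _ = μ * #A * e + ε + lam := add_comm _ _

lemma mapsTo_iterate_istcStep_sparseBall {lam e e' : ℝ} {K : ℕ}
    (hlam : μ * #A * e + ε ≤ lam) (he' : μ * #A * e + ε + lam ≤ e') (he'e : e' ≤ e)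
    (hK : K ≠ 0) :
    Set.MapsTo (istcStep Ψ (Ψ *ᵥ x + η) lam)^[K] (sparseBall A x e) (sparseBall A x e') :=
  ((mapsTo_istcStep_sparseBall hcol hcoh hμ hη hx hlam).mono_right
    (sparseBall_mono he')).iterate_of_subset (sparseBall_mono he'e) hK

lemma mapsTo_iterate_istcStep_of_mul_le {C₁ α γ lam : ℝ} {K : ℕ} (hC₁ : 0 < C₁)
    (hα : μ * #A * α = 1 - 1 / C₁) (hα0 : 0 ≤ α) (hαγ : 2 ≤ α * γ) (hγ : γ ≤ 1)
    (hlam : C₁ * ε ≤ lam) (hK : K ≠ 0) :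
    Set.MapsTo (istcStep Ψ (Ψ *ᵥ x + η) lam)^[K] (sparseBall A x (α * lam))
      (sparseBall A x (α * γ * lam)) := by
  have hε : ε ≤ lam / C₁ := (le_div_iff₀ hC₁).2 (by linarith)
  have hlam0 : 0 ≤ lam := (mul_nonneg hC₁.le ((Real.sqrt_nonneg _).trans hη)).trans hlam
  have hbias : μ * #A * (α * lam) = lam - lam / C₁ := by
    rw [← mul_assoc, hα]; ring
  refine mapsTo_iterate_istcStep_sparseBall hcol hcoh hμ hη hx ?_ ?_ ?_ hK
  · linarith
  · nlinarith
  · nlinarith [mul_nonneg (mul_nonneg hα0 hlam0) (sub_nonneg.2 hγ)]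

end

theorem istc_exact_support_recovery_general {n p : ℕ} (Ψ : Matrix (Fin n) (Fin p) ℝ)
    (μ ε C₁ α γ lam₀ : ℝ) (s K : ℕ)
    (xdag : Fin p → ℝ) (η y : Fin n → ℝ) (Adag : Finset (Fin p))
    (hcol : ∀ i, ∑ k, Ψ k i ^ 2 = 1)
    (hcoh : ∀ i j, i ≠ j → |∑ k, Ψ k i * Ψ k j| ≤ μ) (hμpos : 0 < μ)
    (hsuppdag : Function.support xdag = (Adag : Set (Fin p)))
    (hcard : Adag.card = s) (hs : 1 ≤ s) (hμs : μ * s < 1 / 2)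
    (hy : y = Ψ.mulVec xdag + η)
    (hη : Real.sqrt (∑ k, η k ^ 2) ≤ ε)
    (hC : 1 / (1 - 2 * μ * s) < C₁)
    (hα : α = (1 - 1 / C₁) / (μ * s))
    (hγ : γ ∈ Set.Ico (2 * μ * s / (1 - 1 / C₁)) 1)
    (hK : 1 ≤ K)
    (xseq : ℕ → Fin p → ℝ)
    (hx0 : xseq 0 = 0)
    (hxstep : ∀ ℓ : ℕ, xseq (ℓ + 1) =
      (fun z : Fin p → ℝ => fun i =>
          softThresh (γ ^ (ℓ + 1) * lam₀)
            (z i + Ψ.transpose.mulVec (y - Ψ.mulVec z) i))^[K] (xseq ℓ))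
    (hlam₀ : ‖xdag‖ ≤ α * γ * lam₀)
    (lstar : ℕ) (hlstar_pos : 1 ≤ lstar)
    (hlstar : γ ^ lstar * lam₀ < C₁ * ε)
    (hlstar_first : ∀ m < lstar, C₁ * ε ≤ γ ^ m * lam₀)
    (hmin : ∀ i ∈ Adag, (C₁ - 1) * ε / (μ * s) < |xdag i|) :
    Function.support (xseq (lstar - 1)) = (Adag : Set (Fin p)) := by
  subst hy hcard
  obtain ⟨hγlo, hγ1⟩ := hγ
  have hμs0 : 0 < μ * #Adag := mul_pos hμpos (by exact_mod_cast hs)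
  have hC₁ : 1 < C₁ := (one_lt_one_div (by linarith) (by linarith)).trans hC
  have hC₁' : 0 < 1 - 1 / C₁ := by
    rw [sub_pos, div_lt_one (by linarith)]; exact hC₁
  have hα0 : 0 < α := hα ▸ div_pos hC₁' hμs0
  have hαμ : μ * #Adag * α = 1 - 1 / C₁ := by
    rw [hα]; field_simp
  have hαγ : 2 ≤ α * γ := by
    calc (2 : ℝ) = 2 * (μ * #Adag * α) / (1 - 1 / C₁) := by
          rw [hαμ, mul_div_assoc, div_self hC₁'.ne', mul_one]
      _ = α * (2 * μ * #Adag / (1 - 1 / C₁)) := by ring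
      _ ≤ α * γ := mul_le_mul_of_nonneg_left hγlo hα0.le
  have hlevel : ∀ ℓ < lstar, xseq ℓ ∈ sparseBall Adag xdag (α * (γ ^ (ℓ + 1) * lam₀)) := by
    intro ℓ
    induction ℓ with
    | zero => intro _; rw [hx0]; exact ⟨by simp, by simpa [mul_assoc] using hlam₀⟩
    | succ ℓ ih =>
      intro hℓ
      have hmaps := mapsTo_iterate_istcStep_of_mul_le hcol hcoh hμpos.le hη hsuppdag.le
        (by linarith) hαμ hα0.le hαγ hγ1.le (hlstar_first (ℓ + 1) hℓ) (by omega : K ≠ 0)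
      rw [hxstep ℓ]
      exact sparseBall_mono (le_of_eq (by ring)) (hmaps (ih (by omega)))
  have hlast := hlevel (lstar - 1) (by omega)
  rw [Nat.sub_add_cancel hlstar_pos] at hlast
  refine support_eq_of_mem_sparseBall hlast fun i hi => lt_trans ?_ (hmin i hi)
  calc α * (γ ^ lstar * lam₀) < α * (C₁ * ε) := mul_lt_mul_of_pos_left hlstar hα0
    _ = (C₁ - 1) * ε / (μ * #Adag) := by rw [hα]; field_simp

/-- Theorem 1 for ISTC, exact support recovery: in the ISTC continuation setting, if
`min_{i ∈ A†} |x†_i| > (C₁ − 1)ε/(μs)`, then the output `x* = x(λ_{ℓ*−1})` satisfies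
`supp(x*) = A†`. -/
theorem istc_exact_support_recovery {n p : ℕ} (Ψ : Matrix (Fin n) (Fin p) ℝ)
    (μ ε C₁ α γ lam₀ : ℝ) (s K : ℕ)
    (xdag : Fin p → ℝ) (η y : Fin n → ℝ) (Adag : Finset (Fin p))
    (hcol : ∀ i, ∑ k, Ψ k i ^ 2 = 1)
    (hcoh : ∀ i j, i ≠ j → |∑ k, Ψ k i * Ψ k j| ≤ μ) (hμpos : 0 < μ)
    (hsuppdag : Function.support xdag = (Adag : Set (Fin p)))
    (hcard : Adag.card = s) (hs : 1 ≤ s) (hμs : μ * s < 1 / 2)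
    (hy : y = Ψ.mulVec xdag + η)
    (hη : Real.sqrt (∑ k, η k ^ 2) ≤ ε) (hε : 0 < ε)
    (hC : 1 / (1 - 2 * μ * s) < C₁)
    (hα : α = (1 - 1 / C₁) / (μ * s))
    (hγ : γ ∈ Set.Ico (2 * μ * s / (1 - 1 / C₁)) 1)
    (hK : 1 ≤ K)
    (xseq : ℕ → Fin p → ℝ)
    (hx0 : xseq 0 = 0)
    (hxstep : ∀ ℓ : ℕ, xseq (ℓ + 1) =
      (fun z : Fin p → ℝ => fun i =>
          softThresh (γ ^ (ℓ + 1) * lam₀)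
            (z i + Ψ.transpose.mulVec (y - Ψ.mulVec z) i))^[K] (xseq ℓ))
    (hlam₀ : ‖xdag‖ ≤ α * γ * lam₀)
    (lstar : ℕ) (hlstar_pos : 1 ≤ lstar)
    (hlstar : γ ^ lstar * lam₀ < C₁ * ε)
    (hlstar_first : ∀ m < lstar, C₁ * ε ≤ γ ^ m * lam₀)
    (hmin : ∀ i ∈ Adag, (C₁ - 1) * ε / (μ * s) < |xdag i|) :
    Function.support (xseq (lstar - 1)) = (Adag : Set (Fin p)) :=
  istc_exact_support_recovery_general Ψ μ ε C₁ α γ lam₀ s K xdag η y Adag hcol hcoh hμpos hsuppdag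
    hcard hs hμs hy hη hC hα hγ hK xseq hx0 hxstep hlam₀ lstar hlstar_pos hlstar hlstar_first hmin
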